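/- arXiv:2410.05000 — 5 statements merged into one kernel-verified Lean document; each statement's English description precedes it below -/
import Mathlib

section
/- Let X be a symmetric positive definite d×d real matrix. Define the admissible set G = {U = (D, m, E) : D > 0 and E − sqrt(D² + m·X·mᵀ) > 0}. Define the set of vectors Ξ = {(1,0,…,0)} ∪ {ξ(v) = (−sqrt(1 − v·X·vᵀ), −vX, 1) : v ∈ ℝᵈ, v·X·vᵀ < 1}. Then U ∈ G if and only if U·ξ > 0 for every ξ ∈ Ξ (geometric quasi-linearization representation). -/
/-!
The nonlinear constraint `E > √(D² + m X mᵀ)` is an envelope of linear ones: for `D > 0`,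
`√(D² + m X mᵀ)` is the maximum of `D √(1 - v X vᵀ) + m X vᵀ` over the open ellipsoid
`v X vᵀ < 1`. The bound is Cauchy–Schwarz twice, once for the form `X` (giving
`m X vᵀ ≤ √(m X mᵀ) √(v X vᵀ)`) and once in `ℝ²`; the maximum is attained at
`v = m / √(D² + m X mᵀ)`, which lies inside the ellipsoid because `D > 0`.
-/

open Matrix

theorem Matrix.PosSemidef.dotProduct_mulVec_sq_le {n : Type*} [Fintype n] {X : Matrix n n ℝ}
    (hX : X.PosSemidef) (u v : n → ℝ) :
    (u ⬝ᵥ X *ᵥ v) ^ 2 ≤ (u ⬝ᵥ X *ᵥ u) * (v ⬝ᵥ X *ᵥ v) := by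
  classical
  have hsymm : v ⬝ᵥ X *ᵥ u = u ⬝ᵥ X *ᵥ v := by
    rw [dotProduct_mulVec, ← mulVec_transpose, ← conjTranspose_eq_transpose_of_trivial,
      hX.isHermitian.eq, dotProduct_comm]
  have h := LinearMap.BilinForm.apply_mul_apply_le_of_forall_zero_le (toLinearMap₂' ℝ X)
    (fun x => by simpa [toLinearMap₂'_apply'] using hX.dotProduct_mulVec_nonneg x) u v
  rwa [toLinearMap₂'_apply', toLinearMap₂'_apply', toLinearMap₂'_apply',
    toLinearMap₂'_apply', hsymm, ← sq] at h

theorem Real.mul_add_mul_le_sqrt_mul_sqrt (p q r s : ℝ) :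
    p * r + q * s ≤ √(p ^ 2 + q ^ 2) * √(r ^ 2 + s ^ 2) := by
  rw [← Real.sqrt_mul (by positivity)]
  exact (le_abs_self _).trans <|
    Real.abs_le_sqrt (by nlinarith [sq_nonneg (p * s - q * r)])

theorem Real.mul_sqrt_one_sub_add_le_sqrt {D a b c : ℝ} (ha : 0 ≤ a) (hc₀ : 0 ≤ c)
    (hc₁ : c ≤ 1) (hb : b ^ 2 ≤ a * c) :
    D * √(1 - c) + b ≤ √(D ^ 2 + a) :=
  calc D * √(1 - c) + b ≤ D * √(1 - c) + √a * √c := by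
        gcongr
        rw [← Real.sqrt_mul ha]
        exact (le_abs_self b).trans (Real.abs_le_sqrt hb)
    _ ≤ √(D ^ 2 + √a ^ 2) * √(√(1 - c) ^ 2 + √c ^ 2) :=
        Real.mul_add_mul_le_sqrt_mul_sqrt _ _ _ _
    _ = √(D ^ 2 + a) := by
        rw [Real.sq_sqrt ha, Real.sq_sqrt hc₀, Real.sq_sqrt (by linarith)]
        simp

theorem Matrix.PosSemidef.isGreatest_image_mul_sqrt_one_sub_add {n : Type*} [Fintype n]
    {X : Matrix n n ℝ} (hX : X.PosSemidef) {D : ℝ} (hD : 0 < D) (m : n → ℝ) :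
    IsGreatest ((fun v => D * √(1 - v ⬝ᵥ X *ᵥ v) + m ⬝ᵥ X *ᵥ v) '' {v | v ⬝ᵥ X *ᵥ v < 1})
      √(D ^ 2 + m ⬝ᵥ X *ᵥ m) := by
  have hq : ∀ w, 0 ≤ w ⬝ᵥ X *ᵥ w := fun w => by simpa using hX.dotProduct_mulVec_nonneg w
  set a := m ⬝ᵥ X *ᵥ m
  set S := √(D ^ 2 + a)
  have hS : 0 < S := Real.sqrt_pos.mpr (by nlinarith [hq m])
  have hS2 : S ^ 2 = D ^ 2 + a := Real.sq_sqrt (by nlinarith [hq m])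
  have hvv : (S⁻¹ • m) ⬝ᵥ X *ᵥ (S⁻¹ • m) = a / S ^ 2 := by
    simp only [mulVec_smul, smul_dotProduct, dotProduct_smul, smul_eq_mul, a]
    field_simp
  have hmv : m ⬝ᵥ X *ᵥ (S⁻¹ • m) = a / S := by
    simp only [mulVec_smul, dotProduct_smul, smul_eq_mul, a]
    field_simp
  refine ⟨⟨S⁻¹ • m, ?_, ?_⟩, ?_⟩
  · rw [Set.mem_ofPred_eq, hvv, div_lt_one (by positivity)]
    nlinarith
  · show D * √(1 - (S⁻¹ • m) ⬝ᵥ X *ᵥ (S⁻¹ • m)) + m ⬝ᵥ X *ᵥ (S⁻¹ • m) = S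
    rw [hvv, hmv, show 1 - a / S ^ 2 = (D / S) ^ 2 by field_simp; linarith,
      Real.sqrt_sq (div_pos hD hS).le]
    field_simp
    linarith
  · rintro _ ⟨v, hv, rfl⟩
    exact Real.mul_sqrt_one_sub_add_le_sqrt (hq m) (hq v) hv.le
      (hX.dotProduct_mulVec_sq_le m v)

/-- geometric quasi-linearization (GQL) representation of the admissible set:
`U = (D,m,E)` satisfies `D > 0` and `E - sqrt(D² + m X mᵀ) > 0` iff `U ⬝ ξ > 0` for every
`ξ` in the family `Ξ = {(1,0,…,0)} ∪ {(-sqrt(1 - v X vᵀ), -vX, 1) : v X vᵀ < 1}`. -/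
theorem stmt1 (d : ℕ) (X : Matrix (Fin d) (Fin d) ℝ) (hX : X.PosDef)
    (D : ℝ) (m : Fin d → ℝ) (E : ℝ) :
    (0 < D ∧ 0 < E - Real.sqrt (D ^ 2 + m ⬝ᵥ X.mulVec m)) ↔
    (0 < D ∧ ∀ v : Fin d → ℝ, v ⬝ᵥ X.mulVec v < 1 →
      0 < D * (-Real.sqrt (1 - v ⬝ᵥ X.mulVec v)) + m ⬝ᵥ (-(X.mulVec v)) + E) := by
  refine and_congr_right fun hD => ?_
  rw [sub_pos, (hX.posSemidef.isGreatest_image_mul_sqrt_one_sub_add hD m).lt_iff,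
    Set.forall_mem_image]
  refine forall₂_congr fun v _ => ?_
  rw [dotProduct_neg]
  constructor <;> intro h <;> linarith
end

section
/- For the special RHD primitive-to-conserved map with ideal equation of state: given Γ ∈ (1,2], fix conserved variables (D, m, E) with D > 0 and E > sqrt(D² + m X mᵀ) for symmetric positive definite X. Define φ(p) = p/(Γ−1) − E + (m X mᵀ)/(E+p) + D·sqrt(1 − (m X mᵀ)/(E+p)²) for p ∈ [0, ∞). Then φ(0) < 0, φ(p) → +∞ as p → +∞, φ is continuously differentiable with φ'(p) > 0 for all p ≥ 0, and consequently φ has a unique root in (0, ∞). -/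
/-!
Write `M = m X mᵀ ≥ 0` and `u = E + p`. Admissibility `E² > D² + M` makes `1 - M/u² > 0` for all
`p ≥ 0`, so `φ` is smooth there, and with `s = √(E² - M) > D` one computes
`φ(0) = (M + D s)/E - E < (M + s²)/E - E = 0`. The derivative is
`1/(Γ-1) - M/u² + D M/(u³ √(1 - M/u²))`; since `Γ ≤ 2` the first term is at least `1 > M/u²`,
and the last term is nonnegative. Finally `φ(p) ≥ p/(Γ-1) - E`, so `φ → ∞`, and the intermediate
value theorem together with strict monotonicity yields exactly one positive root.
-/

open Filter Set Matrix

theorem existsUnique_root_of_strictMonoOn_Ici {f : ℝ → ℝ} {a : ℝ}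
    (hcont : ContinuousOn f (Ici a)) (hmono : StrictMonoOn f (Ici a)) (ha : f a < 0)
    (htop : Tendsto f atTop atTop) : ∃! p, a < p ∧ f p = 0 := by
  obtain ⟨b, hb, hab⟩ := ((htop.eventually_gt_atTop 0).and (eventually_ge_atTop a)).exists
  obtain ⟨c, hc, hfc⟩ := intermediate_value_Icc hab (hcont.mono Icc_subset_Ici_self)
    ⟨ha.le, hb.le⟩
  have hac : a < c := hc.1.lt_of_ne (by rintro rfl; exact ha.ne hfc)
  refine ⟨c, ⟨hac, hfc⟩, fun q ⟨haq, hfq⟩ => ?_⟩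
  exact hmono.injOn haq.le hac.le (hfq.trans hfc.symm)

namespace RHD

noncomputable def pressureFun (Γ D E M p : ℝ) : ℝ :=
  p / (Γ - 1) - E + M / (E + p) + D * √(1 - M / (E + p) ^ 2)

noncomputable def pressureDeriv (Γ D E M p : ℝ) : ℝ :=
  1 / (Γ - 1) - M / (E + p) ^ 2 + D * M / ((E + p) ^ 3 * √(1 - M / (E + p) ^ 2))

variable {Γ D E M p : ℝ}

lemma one_sub_div_sq_pos (hu : 0 < E + p) (hMu : M < (E + p) ^ 2) :
    0 < 1 - M / (E + p) ^ 2 := by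
  rw [sub_pos, div_lt_one (by positivity)]
  exact hMu

theorem pressureFun_zero_neg (hE : 0 < E) (hDME : D ^ 2 + M < E ^ 2) :
    pressureFun Γ D E M 0 < 0 := by
  set s := √(E ^ 2 - M)
  have hs : s ^ 2 = E ^ 2 - M := Real.sq_sqrt (by nlinarith)
  have hDs : D < s := calc
    D ≤ |D| := le_abs_self D
    _ = √(D ^ 2) := (Real.sqrt_sq_eq_abs D).symm
    _ < s := Real.sqrt_lt_sqrt (sq_nonneg D) (by linarith)
  have hφ0 : pressureFun Γ D E M 0 = (M + D * s) / E - E := by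
    rw [pressureFun, add_zero, show 1 - M / E ^ 2 = (E ^ 2 - M) / E ^ 2 by field_simp,
      Real.sqrt_div' _ (sq_nonneg E), Real.sqrt_sq hE.le]
    ring
  rw [hφ0, sub_neg, div_lt_iff₀ hE]
  nlinarith [Real.sqrt_nonneg (E ^ 2 - M)]

theorem sub_le_pressureFun (hD : 0 ≤ D) (hM : 0 ≤ M) (hu : 0 < E + p) :
    p / (Γ - 1) - E ≤ pressureFun Γ D E M p := by
  have hfrac := div_nonneg hM hu.le
  have hroot := mul_nonneg hD (Real.sqrt_nonneg (1 - M / (E + p) ^ 2))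
  rw [pressureFun]
  linarith

theorem tendsto_pressureFun_atTop (hΓ : 1 < Γ) (hD : 0 ≤ D) (hM : 0 ≤ M) (hE : 0 ≤ E) :
    Tendsto (pressureFun Γ D E M) atTop atTop := by
  have hlin : Tendsto (fun p => p / (Γ - 1) - E) atTop atTop :=
    tendsto_atTop_add_const_right _ _ (tendsto_id.atTop_div_const (sub_pos.mpr hΓ))
  refine tendsto_atTop_mono' _ ?_ hlin
  filter_upwards [eventually_gt_atTop 0] with p hp
  exact sub_le_pressureFun hD hM (by linarith)

theorem hasDerivAt_pressureFun (hu : 0 < E + p) (hMu : M < (E + p) ^ 2) :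
    HasDerivAt (pressureFun Γ D E M) (pressureDeriv Γ D E M p) p := by
  have hsq := one_sub_div_sq_pos hu hMu
  have hE : HasDerivAt (fun x => E + x) 1 p := (hasDerivAt_id p).const_add E
  have hinv : HasDerivAt (fun x => M / (E + x)) (-M / (E + p) ^ 2) p :=
    ((hasDerivAt_const p M).div hE hu.ne').congr_deriv (by ring)
  have hinv2 : HasDerivAt (fun x => 1 - M / (E + x) ^ 2) (2 * M / (E + p) ^ 3) p := by
    refine ((hasDerivAt_const p 1).sub
      ((hasDerivAt_const p M).div (hE.pow 2) (pow_pos hu 2).ne')).congr_deriv ?_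
    simp only [Pi.pow_apply]
    field_simp
    ring
  have hφ : HasDerivAt (fun x => x / (Γ - 1) - E + M / (E + x) + D * √(1 - M / (E + x) ^ 2))
      (1 / (Γ - 1) + -M / (E + p) ^ 2 + D * (2 * M / (E + p) ^ 3 / (2 * √(1 - M / (E + p) ^ 2))))
      p :=
    ((((hasDerivAt_id p).div_const (Γ - 1)).sub_const E).add hinv).add
      ((hinv2.sqrt hsq.ne').const_mul D)
  refine hφ.congr_deriv ?_
  rw [pressureDeriv]
  field_simp
  ring

theorem continuousAt_pressureDeriv (hu : 0 < E + p) (hMu : M < (E + p) ^ 2) :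
    ContinuousAt (pressureDeriv Γ D E M) p := by
  have hsq := one_sub_div_sq_pos hu hMu
  unfold pressureDeriv
  fun_prop (disch := positivity)

theorem pressureDeriv_pos (hΓ1 : 1 < Γ) (hΓ2 : Γ ≤ 2) (hD : 0 ≤ D) (hM : 0 ≤ M)
    (hu : 0 < E + p) (hMu : M < (E + p) ^ 2) : 0 < pressureDeriv Γ D E M p := by
  have h1 : 1 ≤ 1 / (Γ - 1) := by rw [le_div_iff₀ (by linarith)]; linarith
  have h2 : M / (E + p) ^ 2 < 1 := by rw [div_lt_one (by positivity)]; exact hMu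
  have h3 : 0 ≤ D * M / ((E + p) ^ 3 * √(1 - M / (E + p) ^ 2)) := by positivity
  rw [pressureDeriv]
  linarith

end RHD

/-- properties of the pressure function
`φ(p) = p/(Γ-1) - E + (mXmᵀ)/(E+p) + D sqrt(1 - (mXmᵀ)/(E+p)²)`:
`φ(0) < 0`, `φ(p) → +∞`, `φ` is continuously differentiable on `[0,∞)` with positive
derivative there, and `φ` has a unique root in `(0,∞)`. -/
theorem stmt5 (d : ℕ) (X : Matrix (Fin d) (Fin d) ℝ) (hX : X.PosDef)
    (Γ D E : ℝ) (m : Fin d → ℝ)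
    (hΓ1 : 1 < Γ) (hΓ2 : Γ ≤ 2)
    (hD : 0 < D) (hE : Real.sqrt (D ^ 2 + m ⬝ᵥ X.mulVec m) < E)
    (φ : ℝ → ℝ)
    (hφ : ∀ p, φ p = p / (Γ - 1) - E + (m ⬝ᵥ X.mulVec m) / (E + p)
        + D * Real.sqrt (1 - (m ⬝ᵥ X.mulVec m) / (E + p) ^ 2)) :
    φ 0 < 0 ∧
    Filter.Tendsto φ Filter.atTop Filter.atTop ∧
    (∃ φ' : ℝ → ℝ, ContinuousOn φ' (Set.Ici 0) ∧
      ∀ p ∈ Set.Ici (0 : ℝ), HasDerivAt φ (φ' p) p ∧ 0 < φ' p) ∧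
    (∃! p : ℝ, 0 < p ∧ φ p = 0) := by
  set M := m ⬝ᵥ X *ᵥ m
  have hM : 0 ≤ M := by simpa using hX.posSemidef.dotProduct_mulVec_nonneg m
  have hE0 : 0 < E := (Real.sqrt_nonneg _).trans_lt hE
  have hDME : D ^ 2 + M < E ^ 2 := (Real.sqrt_lt' hE0).mp hE
  have hadm : ∀ p ∈ Ici (0 : ℝ), 0 < E + p ∧ M < (E + p) ^ 2 := fun p (hp : 0 ≤ p) =>
    ⟨by linarith, by nlinarith⟩
  obtain rfl : φ = RHD.pressureFun Γ D E M := funext hφ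
  have hderiv : ∀ p ∈ Ici (0 : ℝ), HasDerivAt (RHD.pressureFun Γ D E M)
      (RHD.pressureDeriv Γ D E M p) p ∧ 0 < RHD.pressureDeriv Γ D E M p := fun p hp =>
    ⟨RHD.hasDerivAt_pressureFun (hadm p hp).1 (hadm p hp).2,
      RHD.pressureDeriv_pos hΓ1 hΓ2 hD.le hM (hadm p hp).1 (hadm p hp).2⟩
  have hcont : ContinuousOn (RHD.pressureFun Γ D E M) (Ici 0) := fun p hp =>
    (hderiv p hp).1.continuousAt.continuousWithinAt
  have hmono : StrictMonoOn (RHD.pressureFun Γ D E M) (Ici 0) :=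
    strictMonoOn_of_hasDerivWithinAt_pos (convex_Ici 0) hcont
      (fun p hp => (hderiv p (interior_subset hp)).1.hasDerivWithinAt)
      (fun p hp => (hderiv p (interior_subset hp)).2)
  have hzero := RHD.pressureFun_zero_neg (Γ := Γ) hE0 hDME
  have htop := RHD.tendsto_pressureFun_atTop hΓ1 hD.le hM hE0.le
  refine ⟨hzero, htop, ⟨_, fun p hp => ?_, hderiv⟩,
    existsUnique_root_of_strictMonoOn_Ici hcont hmono hzero htop⟩
  exact (RHD.continuousAt_pressureDeriv (hadm p hp).1 (hadm p hp).2).continuousWithinAt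
end

section
/- Under the assumptions D > 0, E > sqrt(D² + m X mᵀ), Γ ∈ (1,2], the pressure root p(U) of the equation φ(p) = p/(Γ−1) − E + (m X mᵀ)/(E+p) + D·sqrt(1 − (m X mᵀ)/(E+p)²) = 0 satisfies 0 < p(U) ≤ (Γ−1)(E − D·sqrt(1 − (m X mᵀ)/E²)). -/
/-!
Write `r = m X mᵀ ≥ 0`. At `p = 0` the root equation would read `D √(1 - r/E²) = (E² - r)/E`,
i.e. `D² = E² - r` after squaring, which `E² > D² + r` forbids; so `p > 0`. For the upper bound,
solve the equation for `p/(Γ-1)`: the term `r/(E+p)` is nonnegative and `√(1 - r/(E+p)²)` is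
increasing in `p`, hence at least its value `√(1 - r/E²)` at `p = 0`.
-/

noncomputable def pressureFn (Γ D E r p : ℝ) : ℝ :=
  p / (Γ - 1) - E + r / (E + p) + D * Real.sqrt (1 - r / (E + p) ^ 2)

lemma pressureFn_zero_ne_zero {Γ D E r : ℝ} (hE : 0 < E) (hDE : D ^ 2 + r < E ^ 2) :
    pressureFn Γ D E r 0 ≠ 0 := by
  intro h0
  have hgap : D ^ 2 < E ^ 2 - r := by linarith
  have hgap0 : 0 < E ^ 2 - r := by nlinarith
  have hsqrt : Real.sqrt (1 - r / E ^ 2) = Real.sqrt (E ^ 2 - r) / E := by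
    rw [show 1 - r / E ^ 2 = (E ^ 2 - r) / E ^ 2 by field_simp, Real.sqrt_div' _ (sq_nonneg E),
      Real.sqrt_sq hE.le]
  have hroot : D * Real.sqrt (E ^ 2 - r) = Real.sqrt (E ^ 2 - r) ^ 2 := by
    simp only [pressureFn, zero_div, add_zero, hsqrt] at h0
    rw [Real.sq_sqrt hgap0.le]
    field_simp at h0
    linarith
  have hD : D = Real.sqrt (E ^ 2 - r) := by
    rw [sq (Real.sqrt (E ^ 2 - r))] at hroot
    exact mul_right_cancel₀ (Real.sqrt_pos.mpr hgap0).ne' hroot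
  rw [hD, Real.sq_sqrt hgap0.le] at hgap
  exact lt_irrefl _ hgap

lemma le_of_pressureFn_eq_zero {Γ D E r p : ℝ} (hΓ : 1 < Γ) (hD : 0 ≤ D) (hr : 0 ≤ r)
    (hE : 0 < E) (hp : 0 ≤ p) (hroot : pressureFn Γ D E r p = 0) :
    p ≤ (Γ - 1) * (E - D * Real.sqrt (1 - r / E ^ 2)) := by
  have hΓ0 : 0 < Γ - 1 := by linarith
  have hsqrt : Real.sqrt (1 - r / E ^ 2) ≤ Real.sqrt (1 - r / (E + p) ^ 2) := by
    gcongr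
    linarith
  have hsolved : p / (Γ - 1) = E - r / (E + p) - D * Real.sqrt (1 - r / (E + p) ^ 2) := by
    unfold pressureFn at hroot
    linarith
  have hfrac : 0 ≤ r / (E + p) := by positivity
  rw [← div_le_iff₀' hΓ0, hsolved]
  nlinarith [mul_le_mul_of_nonneg_left hsqrt hD]

theorem stmt6_general (d : ℕ) (X : Matrix (Fin d) (Fin d) ℝ) (hX : X.PosDef)
    (Γ D E : ℝ) (m : Fin d → ℝ)
    (hΓ1 : 1 < Γ)
    (hD : 0 < D) (hE : Real.sqrt (D ^ 2 + m ⬝ᵥ X.mulVec m) < E)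
    (φ : ℝ → ℝ)
    (hφ : ∀ p, φ p = p / (Γ - 1) - E + (m ⬝ᵥ X.mulVec m) / (E + p)
        + D * Real.sqrt (1 - (m ⬝ᵥ X.mulVec m) / (E + p) ^ 2))
    (p : ℝ) (hp : 0 ≤ p) (hroot : φ p = 0) :
    0 < p ∧ p ≤ (Γ - 1) * (E - D * Real.sqrt (1 - (m ⬝ᵥ X.mulVec m) / E ^ 2)) := by
  have hr : 0 ≤ m ⬝ᵥ X.mulVec m := hX.posSemidef.dotProduct_mulVec_nonneg m
  have hE0 : 0 < E := (Real.sqrt_nonneg _).trans_lt hE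
  have hDE : D ^ 2 + m ⬝ᵥ X.mulVec m < E ^ 2 := (Real.sqrt_lt' hE0).mp hE
  have hpressure : pressureFn Γ D E (m ⬝ᵥ X.mulVec m) p = 0 := by
    rw [← hroot, hφ, pressureFn]
  refine ⟨hp.lt_of_ne ?_, le_of_pressureFn_eq_zero hΓ1 hD.le hr hE0 hp hpressure⟩
  rintro rfl
  exact pressureFn_zero_ne_zero hE0 hDE hpressure

/-- the pressure root of `φ` satisfies
`0 < p ≤ (Γ-1)(E - D sqrt(1 - (mXmᵀ)/E²))`. -/
theorem stmt6 (d : ℕ) (X : Matrix (Fin d) (Fin d) ℝ) (hX : X.PosDef)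
    (Γ D E : ℝ) (m : Fin d → ℝ)
    (hΓ1 : 1 < Γ) (hΓ2 : Γ ≤ 2)
    (hD : 0 < D) (hE : Real.sqrt (D ^ 2 + m ⬝ᵥ X.mulVec m) < E)
    (φ : ℝ → ℝ)
    (hφ : ∀ p, φ p = p / (Γ - 1) - E + (m ⬝ᵥ X.mulVec m) / (E + p)
        + D * Real.sqrt (1 - (m ⬝ᵥ X.mulVec m) / (E + p) ^ 2))
    (p : ℝ) (hp : 0 ≤ p) (hroot : φ p = 0) :
    0 < p ∧ p ≤ (Γ - 1) * (E - D * Real.sqrt (1 - (m ⬝ᵥ X.mulVec m) / E ^ 2)) :=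
  stmt6_general d X hX Γ D E m hΓ1 hD hE φ hφ p hp hroot
end

section
/- Let Γ ∈ (1,2] and (D, m, E) satisfy D > 0 and E > sqrt(D² + m X mᵀ). Define g(p) = p − (Γ−1)φ(p) where φ(p) = p/(Γ−1) − E + (m X mᵀ)/(E+p) + D·sqrt(1 − (m X mᵀ)/(E+p)²). Then for all p > 0: 0 ≤ g'(p) ≤ δ where δ := (Γ−1)(m X mᵀ)/E² < 1. Consequently g is a contraction on [0,∞) with Lipschitz constant δ, and the fixed-point iteration p^{(n)} = g(p^{(n−1)}) with any initial value p^{(0)} > 0 stays nonnegative and converges to the unique root p(U) of φ with |p^{(n)} − p(U)| ≤ δⁿ |p^{(0)} − p(U)|. -/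
/-!
Put `q = E + p` and `ψ(q) = M/q + D√(1 - M/q²)` with `M = m X mᵀ`, so that
`g(p) = (Γ-1)(E - ψ(E+p))`. Cauchy–Schwarz for `(√M, D)` and the unit vector
`(√M/q, √(1 - M/q²))` gives `ψ(q) ≤ √(D² + M) < E`, hence `g > 0` on `[0,∞)`. Differentiating,
`g'(p) = (Γ-1)(M/q²)(1 - D/√(q² - M))`, and `0 ≤ D < √(q² - M)` for `q ≥ E` puts it in
`[0, (Γ-1)M/E²]`; the mean value theorem then makes `g` a `δ`-contraction of `[0,∞)`.
Since `ψ ≥ 0`, `g ≤ (Γ-1)E`, so `p - g(p)` changes sign on `[0, (Γ-1)E]` and `g` has a fixed point,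
unique by contraction; the fixed points of `g` are exactly the roots of `φ`.
-/

open Set Filter Topology

theorem mul_add_mul_le_sqrt_mul_sqrt (a b c d : ℝ) :
    a * b + c * d ≤ √(a ^ 2 + c ^ 2) * √(b ^ 2 + d ^ 2) := by
  rw [← Real.sqrt_mul (by positivity)]
  exact (le_abs_self _).trans <| Real.abs_le_sqrt <| by nlinarith [sq_nonneg (a * d - b * c)]

theorem Real.sqrt_one_sub_div_sq {M q : ℝ} (hq : 0 < q) : √(1 - M / q ^ 2) = √(q ^ 2 - M) / q := by
  rw [one_sub_div (by positivity), Real.sqrt_div' _ (by positivity), Real.sqrt_sq hq.le]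

noncomputable def psi (D M q : ℝ) : ℝ := M / q + D * √(1 - M / q ^ 2)

section psi

variable {D M q : ℝ}

theorem psi_nonneg (hD : 0 ≤ D) (hM : 0 ≤ M) (hq : 0 < q) : 0 ≤ psi D M q := by
  unfold psi; positivity

theorem psi_le_sqrt (hM : 0 ≤ M) (hq : 0 < q) (hMq : M ≤ q ^ 2) : psi D M q ≤ √(D ^ 2 + M) := by
  have hunit : (√M / q) ^ 2 + √(1 - M / q ^ 2) ^ 2 = 1 := by
    have hrad : 0 ≤ 1 - M / q ^ 2 := by rw [sub_nonneg, div_le_one (by positivity)]; exact hMq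
    rw [div_pow, Real.sq_sqrt hM, Real.sq_sqrt hrad]
    ring
  have := mul_add_mul_le_sqrt_mul_sqrt (√M) (√M / q) D √(1 - M / q ^ 2)
  rw [hunit, Real.sqrt_one, mul_one, Real.sq_sqrt hM, add_comm M] at this
  calc psi D M q = √M * (√M / q) + D * √(1 - M / q ^ 2) := by
        rw [psi, mul_div_assoc', Real.mul_self_sqrt hM]
    _ ≤ _ := this

theorem hasDerivAt_psi (hq : 0 < q) (hMq : M < q ^ 2) :
    HasDerivAt (psi D M) (-(M / q ^ 2) * (1 - D / √(q ^ 2 - M))) q := by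
  have hfrac : HasDerivAt (fun x => M / x) (-(M / q ^ 2)) q :=
    ((hasDerivAt_const q M).div (hasDerivAt_id' q) hq.ne').congr_deriv (by ring)
  have hrad : HasDerivAt (fun x => 1 - M / x ^ 2) (2 * M / q ^ 3) q :=
    (((hasDerivAt_const q M).div (hasDerivAt_pow 2 q) (by positivity)).const_sub 1).congr_deriv
      (by field_simp; ring)
  have hpos : 0 < 1 - M / q ^ 2 := by rw [sub_pos, div_lt_one (by positivity)]; exact hMq
  have hS : 0 < √(q ^ 2 - M) := Real.sqrt_pos.2 (by linarith)
  refine (hfrac.add ((hrad.sqrt hpos.ne').const_mul D)).congr_deriv ?_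
  rw [Real.sqrt_one_sub_div_sq hq]
  field_simp
  ring

end psi

noncomputable def contractionMap (Γ D E M p : ℝ) : ℝ := (Γ - 1) * (E - psi D M (E + p))

noncomputable def contractionMapDeriv (Γ D E M p : ℝ) : ℝ :=
  (Γ - 1) * (M / (E + p) ^ 2) * (1 - D / √((E + p) ^ 2 - M))

section contractionMap

variable {Γ D E M p : ℝ}

theorem add_pos_and_sq_add_lt_sq_of_sqrt_lt (hE : √(D ^ 2 + M) < E) (hp : 0 ≤ p) :
    0 < E + p ∧ D ^ 2 + M < (E + p) ^ 2 := by
  have hE0 : 0 < E := (Real.sqrt_nonneg _).trans_lt hE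
  exact ⟨by linarith, (Real.lt_sq_of_sqrt_lt hE).trans_le (by gcongr; linarith)⟩

theorem contractionMap_pos (hΓ : 1 < Γ) (hM : 0 ≤ M) (hE : √(D ^ 2 + M) < E) (hp : 0 ≤ p) :
    0 < contractionMap Γ D E M p := by
  obtain ⟨hq, hq2⟩ := add_pos_and_sq_add_lt_sq_of_sqrt_lt hE hp
  have := psi_le_sqrt (D := D) hM hq (by nlinarith)
  unfold contractionMap
  exact mul_pos (by linarith) (by linarith)

theorem contractionMap_le (hΓ : 1 < Γ) (hD : 0 ≤ D) (hM : 0 ≤ M) (hE : √(D ^ 2 + M) < E)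
    (hp : 0 ≤ p) : contractionMap Γ D E M p ≤ (Γ - 1) * E := by
  have := psi_nonneg hD hM (add_pos_and_sq_add_lt_sq_of_sqrt_lt hE hp).1
  unfold contractionMap
  exact mul_le_mul_of_nonneg_left (by linarith) (by linarith)

theorem hasDerivAt_contractionMap (hE : √(D ^ 2 + M) < E) (hp : 0 ≤ p) :
    HasDerivAt (contractionMap Γ D E M) (contractionMapDeriv Γ D E M p) p := by
  obtain ⟨hq, hq2⟩ := add_pos_and_sq_add_lt_sq_of_sqrt_lt hE hp
  have hpsi := (hasDerivAt_psi (D := D) hq (by nlinarith)).comp p ((hasDerivAt_id' p).const_add E)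
  exact ((hpsi.const_sub E).const_mul (Γ - 1)).congr_deriv (by unfold contractionMapDeriv; ring)

theorem contractionMapDeriv_mem_Icc (hΓ : 1 < Γ) (hD : 0 ≤ D) (hM : 0 ≤ M)
    (hE : √(D ^ 2 + M) < E) (hp : 0 ≤ p) :
    contractionMapDeriv Γ D E M p ∈ Icc 0 ((Γ - 1) * M / E ^ 2) := by
  obtain ⟨hq, hq2⟩ := add_pos_and_sq_add_lt_sq_of_sqrt_lt hE hp
  have hE0 : 0 < E := (Real.sqrt_nonneg _).trans_lt hE
  have hS : D < √((E + p) ^ 2 - M) := Real.lt_sqrt hD |>.2 (by linarith)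
  have hfactor : 0 ≤ 1 - D / √((E + p) ^ 2 - M) ∧ 1 - D / √((E + p) ^ 2 - M) ≤ 1 := by
    constructor
    · rw [sub_nonneg, div_le_one (hD.trans_lt hS)]; exact hS.le
    · have : 0 ≤ D / √((E + p) ^ 2 - M) := by positivity
      linarith
  refine ⟨by have := hfactor.1; unfold contractionMapDeriv; positivity, ?_⟩
  calc contractionMapDeriv Γ D E M p
      ≤ (Γ - 1) * (M / (E + p) ^ 2) := mul_le_of_le_one_right (by positivity) hfactor.2
    _ ≤ (Γ - 1) * (M / E ^ 2) := by gcongr; linarith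
    _ = (Γ - 1) * M / E ^ 2 := by ring

theorem abs_contractionMap_sub_le (hΓ : 1 < Γ) (hD : 0 ≤ D) (hM : 0 ≤ M)
    (hE : √(D ^ 2 + M) < E) :
    ∀ p₁ ∈ Ici 0, ∀ p₂ ∈ Ici 0, |contractionMap Γ D E M p₁ - contractionMap Γ D E M p₂| ≤
      (Γ - 1) * M / E ^ 2 * |p₁ - p₂| := by
  intro p₁ hp₁ p₂ hp₂
  have hbound (p : ℝ) (hp : p ∈ Ici 0) := contractionMapDeriv_mem_Icc hΓ hD hM hE hp
  simpa only [Real.norm_eq_abs] using (convex_Ici 0).norm_image_sub_le_of_norm_hasDerivWithin_le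
    (fun p hp => (hasDerivAt_contractionMap hE hp).hasDerivWithinAt)
    (fun p hp => (abs_of_nonneg (hbound p hp).1).trans_le (hbound p hp).2) hp₂ hp₁

theorem contraction_const_lt_one (hΓ2 : Γ ≤ 2) (hM : 0 ≤ M) (hE : √(D ^ 2 + M) < E) :
    (Γ - 1) * M / E ^ 2 < 1 := by
  have hE0 : 0 < E := (Real.sqrt_nonneg _).trans_lt hE
  have := Real.lt_sq_of_sqrt_lt hE
  rw [div_lt_one (by positivity)]
  nlinarith

theorem exists_pos_contractionMap_eq (hΓ : 1 < Γ) (hD : 0 ≤ D) (hM : 0 ≤ M)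
    (hE : √(D ^ 2 + M) < E) : ∃ p, 0 < p ∧ contractionMap Γ D E M p = p := by
  have hE0 : 0 < E := (Real.sqrt_nonneg _).trans_lt hE
  have hcont : ContinuousOn (fun p => p - contractionMap Γ D E M p) (Icc 0 ((Γ - 1) * E)) :=
    fun p hp => (continuousAt_id.sub
      (hasDerivAt_contractionMap hE hp.1).continuousAt).continuousWithinAt
  have h0 := contractionMap_pos hΓ hM hE le_rfl
  have hP : 0 ≤ (Γ - 1) * E := by nlinarith
  obtain ⟨p, hp, hroot⟩ := intermediate_value_Icc hP hcont
    ⟨by simp only [zero_sub, neg_nonpos]; exact h0.le,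
      sub_nonneg.2 (contractionMap_le hΓ hD hM hE hP)⟩
  refine ⟨p, hp.1.lt_of_ne ?_, (sub_eq_zero.1 hroot).symm⟩
  rintro rfl
  simp only [zero_sub, neg_eq_zero] at hroot
  exact h0.ne' hroot

end contractionMap

section FixedPoint

variable {g : ℝ → ℝ} {s : Set ℝ} {δ : ℝ}

theorem eq_of_fixedPt_of_abs_sub_le (hδ : δ < 1)
    (hlip : ∀ x ∈ s, ∀ y ∈ s, |g x - g y| ≤ δ * |x - y|) {a b : ℝ} (ha : a ∈ s) (hb : b ∈ s)
    (hga : g a = a) (hgb : g b = b) : a = b := by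
  have h := hlip a ha b hb
  rw [hga, hgb] at h
  have : |a - b| ≤ 0 := by nlinarith [abs_nonneg (a - b)]
  exact sub_eq_zero.1 (abs_nonpos_iff.1 this)

theorem abs_sub_fixedPt_le_pow (hδ : 0 ≤ δ) (hlip : ∀ x ∈ s, ∀ y ∈ s, |g x - g y| ≤ δ * |x - y|)
    {p : ℝ} (hp : p ∈ s) (hgp : g p = p) {u : ℕ → ℝ} (hu : ∀ n, u n ∈ s)
    (hrec : ∀ n, u (n + 1) = g (u n)) (n : ℕ) : |u n - p| ≤ δ ^ n * |u 0 - p| := by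
  induction n with
  | zero => simp
  | succ n ih =>
    calc |u (n + 1) - p| = |g (u n) - g p| := by rw [hrec, hgp]
      _ ≤ δ * |u n - p| := hlip _ (hu n) _ hp
      _ ≤ δ * (δ ^ n * |u 0 - p|) := by gcongr
      _ = δ ^ (n + 1) * |u 0 - p| := by ring

end FixedPoint

theorem tendsto_of_abs_sub_le_pow_mul {u : ℕ → ℝ} {p δ C : ℝ} (hδ₀ : 0 ≤ δ) (hδ₁ : δ < 1)
    (h : ∀ n, |u n - p| ≤ δ ^ n * C) : Tendsto u atTop (𝓝 p) := by
  rw [tendsto_iff_dist_tendsto_zero]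
  refine squeeze_zero (fun _ => dist_nonneg) (fun n => (Real.dist_eq _ _).trans_le (h n)) ?_
  simpa using (tendsto_pow_atTop_nhds_zero_of_lt_one hδ₀ hδ₁).mul_const C

/-- the fixed-point map `g(p) = p - (Γ-1)φ(p)` has derivative in `[0, δ]` with
`δ = (Γ-1)(mXmᵀ)/E² < 1`, is a contraction on `[0,∞)` with Lipschitz constant `δ`, and the
fixed-point iteration starting from any `p⁰ > 0` stays nonnegative and converges to the
unique positive root of `φ` with geometric error `δⁿ`. -/
theorem stmt7 (d : ℕ) (X : Matrix (Fin d) (Fin d) ℝ) (hX : X.PosDef)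
    (Γ D E δ : ℝ) (m : Fin d → ℝ)
    (hΓ1 : 1 < Γ) (hΓ2 : Γ ≤ 2)
    (hD : 0 < D) (hE : Real.sqrt (D ^ 2 + m ⬝ᵥ X.mulVec m) < E)
    (φ g : ℝ → ℝ)
    (hφ : ∀ p, φ p = p / (Γ - 1) - E + (m ⬝ᵥ X.mulVec m) / (E + p)
        + D * Real.sqrt (1 - (m ⬝ᵥ X.mulVec m) / (E + p) ^ 2))
    (hg : ∀ p, g p = p - (Γ - 1) * φ p)
    (hδ : δ = (Γ - 1) * (m ⬝ᵥ X.mulVec m) / E ^ 2)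
    (seq : ℕ → ℝ) (hs0 : 0 < seq 0) (hsrec : ∀ n, seq (n + 1) = g (seq n)) :
    δ < 1 ∧
    (∀ p : ℝ, 0 < p → ∃ g' : ℝ, HasDerivAt g g' p ∧ 0 ≤ g' ∧ g' ≤ δ) ∧
    (∀ p₁ p₂ : ℝ, 0 ≤ p₁ → 0 ≤ p₂ → |g p₁ - g p₂| ≤ δ * |p₁ - p₂|) ∧
    (∃! pstar : ℝ, 0 < pstar ∧ φ pstar = 0) ∧
    (∀ pstar : ℝ, 0 < pstar → φ pstar = 0 →
      (∀ n, 0 ≤ seq n) ∧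
      (∀ n, |seq n - pstar| ≤ δ ^ n * |seq 0 - pstar|) ∧
      Filter.Tendsto seq Filter.atTop (nhds pstar)) := by
  set M := m ⬝ᵥ X.mulVec m
  have hM : 0 ≤ M := hX.posSemidef.dotProduct_mulVec_nonneg m
  have hΓ : Γ - 1 ≠ 0 := sub_ne_zero.2 hΓ1.ne'
  have hroot (p : ℝ) : φ p = 0 ↔ g p = p := by
    rw [hg, sub_eq_self, mul_eq_zero, or_iff_right hΓ]
  have hgmap : g = contractionMap Γ D E M := funext fun p => by
    rw [hg, hφ, contractionMap, psi]
    field_simp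
    ring
  subst hgmap hδ
  have hlip := abs_contractionMap_sub_le hΓ1 hD.le hM hE
  have hδ₀ : 0 ≤ (Γ - 1) * M / E ^ 2 := by have := hΓ1.le; positivity
  have hδ₁ := contraction_const_lt_one hΓ2 hM hE
  obtain ⟨p₀, hp₀, hfix⟩ := exists_pos_contractionMap_eq hΓ1 hD.le hM hE
  refine ⟨hδ₁, fun p hp => ⟨_, hasDerivAt_contractionMap hE hp.le,
      contractionMapDeriv_mem_Icc hΓ1 hD.le hM hE hp.le⟩,
    fun p₁ p₂ h₁ h₂ => hlip p₁ h₁ p₂ h₂,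
    ⟨p₀, ⟨hp₀, (hroot p₀).2 hfix⟩, fun q ⟨hq, hφq⟩ =>
      eq_of_fixedPt_of_abs_sub_le hδ₁ hlip hq.le hp₀.le ((hroot q).1 hφq) hfix⟩,
    fun pstar hpstar hφpstar => ?_⟩
  have hpos (n : ℕ) : 0 < seq n := by
    induction n with
    | zero => exact hs0
    | succ n ih => exact hsrec n ▸ contractionMap_pos hΓ1 hM hE ih.le
  have herr := abs_sub_fixedPt_le_pow hδ₀ hlip hpstar.le ((hroot pstar).1 hφpstar)
    (fun n => (hpos n).le) hsrec
  exact ⟨fun n => (hpos n).le, herr, tendsto_of_abs_sub_le_pow_mul hδ₀ hδ₁ herr⟩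
end

section
/- Scaling limiter preserves admissibility of linear constraints: let G* = {W ∈ ℝⁿ : W·ξ > 0 ∀ξ ∈ Ξ} for a vector family Ξ, let W̄ ∈ G*, let W : S → ℝⁿ be any function on a finite set S, and define q_min = min_{x∈S} q(W(x)) where q is a concave function with q(W̄) > 0. If q_min < ε ≤ q(W̄) for some ε > 0 and θ = (q(W̄) − ε)/(q(W̄) − q_min) ∈ [0,1), then the modified values W̃(x) = θ(W(x) − W̄) + W̄ satisfy q(W̃(x)) ≥ ε for all x ∈ S, provided q is concave. -/
theorem ConcaveOn.le_apply_smul_sub_add {𝕜 E β : Type*}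
    [Ring 𝕜] [PartialOrder 𝕜] [IsOrderedRing 𝕜]
    [AddCommGroup E] [Module 𝕜 E] [AddCommMonoid β] [PartialOrder β] [SMul 𝕜 β]
    {s : Set E} {f : E → β} (hf : ConcaveOn 𝕜 s f) {x y : E} (hx : x ∈ s) (hy : y ∈ s)
    {θ : 𝕜} (hθ₀ : 0 ≤ θ) (hθ₁ : θ ≤ 1) :
    θ • f x + (1 - θ) • f y ≤ f (θ • (x - y) + y) := by
  have hcombo : θ • (x - y) + y = θ • x + (1 - θ) • y := by
    rw [smul_sub, sub_smul, one_smul]; abel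
  rw [hcombo]
  exact hf.2 hx hy hθ₀ (sub_nonneg.2 hθ₁) (add_sub_cancel θ 1)

theorem div_sub_sub_mem_Ico {a b ε : ℝ} (hb : b < ε) (ha : ε ≤ a) :
    (a - ε) / (a - b) ∈ Set.Ico 0 1 :=
  ⟨div_nonneg (by linarith) (by linarith), (div_lt_one (by linarith)).2 (by linarith)⟩

-- The limiter's `θ` is the weight putting the convex combination of `q_min` and `q(W̄)` at `ε`.
theorem div_sub_sub_mul_add_one_sub_mul {a b ε : ℝ} (hab : b ≠ a) :
    (a - ε) / (a - b) * b + (1 - (a - ε) / (a - b)) * a = ε := by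
  have : a - b ≠ 0 := sub_ne_zero.2 hab.symm
  field_simp
  ring

theorem stmt16_general {n : ℕ} {ι : Type*} [Fintype ι] [Nonempty ι]
    (q : (Fin n → ℝ) → ℝ) (hq : ConcaveOn ℝ Set.univ q)
    (Wbar : Fin n → ℝ)
    (W : ι → (Fin n → ℝ)) (qmin ε θ : ℝ)
    (hqmin : qmin = Finset.univ.inf' Finset.univ_nonempty (fun x => q (W x)))
    (hεle : ε ≤ q Wbar) (hlt : qmin < ε)
    (hθ : θ = (q Wbar - ε) / (q Wbar - qmin)) :
    (0 ≤ θ ∧ θ < 1) ∧ ∀ x : ι, ε ≤ q (θ • (W x - Wbar) + Wbar) := by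
  obtain ⟨hθ₀, hθ₁⟩ : θ ∈ Set.Ico 0 1 := hθ ▸ div_sub_sub_mem_Ico hlt hεle
  refine ⟨⟨hθ₀, hθ₁⟩, fun x => ?_⟩
  have hmin : qmin ≤ q (W x) := hqmin ▸ Finset.inf'_le _ (Finset.mem_univ x)
  calc ε = θ * qmin + (1 - θ) * q Wbar :=
        (hθ ▸ div_sub_sub_mul_add_one_sub_mul (by linarith)).symm
    _ ≤ θ * q (W x) + (1 - θ) * q Wbar := by gcongr
    _ ≤ q (θ • (W x - Wbar) + Wbar) :=
        hq.le_apply_smul_sub_add (Set.mem_univ _) (Set.mem_univ _) hθ₀ hθ₁.le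

/-- correctness of the scaling (PCP) limiter for a concave constraint `q`:
if `q(W̄) ≥ ε > q_min = min_x q(W(x))` and `θ = (q(W̄)-ε)/(q(W̄)-q_min)`, then `θ ∈ [0,1)`
and the limited values `W̃(x) = θ(W(x)-W̄) + W̄` satisfy `q(W̃(x)) ≥ ε` for all `x`. -/
theorem stmt16 {n : ℕ} {ι : Type*} [Fintype ι] [Nonempty ι]
    (Ξ : Set (Fin n → ℝ))
    (q : (Fin n → ℝ) → ℝ) (hq : ConcaveOn ℝ Set.univ q)
    (Wbar : Fin n → ℝ) (hWbarG : ∀ ξ ∈ Ξ, 0 < Wbar ⬝ᵥ ξ)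
    (hqWbar : 0 < q Wbar)
    (W : ι → (Fin n → ℝ)) (qmin ε θ : ℝ)
    (hqmin : qmin = Finset.univ.inf' Finset.univ_nonempty (fun x => q (W x)))
    (hε : 0 < ε) (hεle : ε ≤ q Wbar) (hlt : qmin < ε)
    (hθ : θ = (q Wbar - ε) / (q Wbar - qmin)) :
    (0 ≤ θ ∧ θ < 1) ∧ ∀ x : ι, ε ≤ q (θ • (W x - Wbar) + Wbar) :=
  stmt16_general q hq Wbar W qmin ε θ hqmin hεle hlt hθ
end
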